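/- If p : E → B is a fibration, then p has the weakly homotopically unique path lifting property (whupl) if and only if p has the weakly unique path homotopically lifting property (wuphl). -/

import Mathlib

universe u

open scoped unitInterval

/-- `p` has the weakly homotopically unique path lifting property (whupl). -/
def Whupl {E B : Type*} [TopologicalSpace E] [TopologicalSpace B] (p : C(E, B)) : Prop :=
  ∀ α β : C(unitInterval, E), α 0 = β 0 → α 1 = β 1 → p.comp α = p.comp β →
    α.HomotopicRel β {0, 1}

/-- `p` has the weakly unique path homotopically lifting property (wuphl). -/
def Wuphl {E B : Type*} [TopologicalSpace E] [TopologicalSpace B] (p : C(E, B)) : Prop :=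
  ∀ α β : C(unitInterval, E), α 0 = β 0 → α 1 = β 1 →
    (p.comp α).HomotopicRel (p.comp β) {0, 1} →
    α.HomotopicRel β {0, 1}

/-- `p` is a (Hurewicz) fibration: it has the homotopy lifting property with respect to
every topological space. -/
def IsFibration {E B : Type*} [TopologicalSpace E] [TopologicalSpace B] (p : C(E, B)) : Prop :=
  ∀ (X : Type u) [TopologicalSpace X] (f : C(X, E)) (F : C(X × unitInterval, B)),
    (∀ x, F (x, 0) = p (f x)) →
    ∃ F' : C(X × unitInterval, E), (∀ z, p (F' z) = F z) ∧ (∀ x, F' (x, 0) = f x)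

/-!
Wuphl implies whupl, since equal projections are homotopic. Conversely, let
`H : p ∘ α ≃ p ∘ β` rel endpoints and lift it to a homotopy `K` from `α` to some
`α'`. The endpoint tracks `e₀ = K(·, 0)` and `e₁ = K(·, 1)` lie over constant paths, so
`e₀ · α' · e₁⁻¹` lies over the same path as `β` and whupl makes the two homotopic.
On the other hand the lifted square `K` gives `α · e₁ ≃ e₀ · α'`, i.e. `α ≃ e₀ · α' · e₁⁻¹`.
-/

universe v

theorem Path.coe_trans_congr {X : Type*} [TopologicalSpace X] {x y z x' y' z' : X}
    {a : Path x y} {b : Path y z} {a' : Path x' y'} {b' : Path y' z'}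
    (ha : ⇑a = ⇑a') (hb : ⇑b = ⇑b') : ⇑(a.trans b) = ⇑(a'.trans b') := by
  obtain rfl : x = x' := by simpa using congrFun ha 0
  obtain rfl : y = y' := by simpa using congrFun ha 1
  obtain rfl : z = z' := by simpa using congrFun hb 1
  obtain rfl := Path.ext ha
  obtain rfl := Path.ext hb
  rfl

section

variable {E B : Type*} [TopologicalSpace E] [TopologicalSpace B] {p : C(E, B)}

theorem IsFibration.exists_homotopy_lift {X : Type v} [TopologicalSpace X]
    (hp : IsFibration.{max v u} p) {f : C(X, E)} {g : C(X, B)} (H : (p.comp f).Homotopy g) :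
    ∃ (f' : C(X, E)) (K : f.Homotopy f'), ∀ z, p (K z) = H z := by
  obtain ⟨F, hFp, hF0⟩ := hp (ULift.{u} X) (f.comp ⟨ULift.down, continuous_uliftDown⟩)
    (H.toContinuousMap.comp ⟨fun z => (z.2, z.1.down), by fun_prop⟩)
    (fun x => H.apply_zero x.down)
  exact ⟨F.comp ⟨fun x => (ULift.up x, 1), by fun_prop⟩,
    { toFun := fun z => F (ULift.up z.2, z.1)
      map_zero_left := fun x => hF0 (ULift.up x)
      map_one_left := fun _ => rfl }, fun _ => hFp _⟩

theorem Whupl.homotopic_of_map_eq (hw : Whupl p) {x y : E} {γ δ : Path x y}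
    (h : γ.map p.continuous = δ.map p.continuous) : γ.Homotopic δ :=
  hw γ δ (by simp) (by simp) (congrArg Path.toContinuousMap h)

theorem Whupl.wuphl (hw : Whupl p) (hp : IsFibration.{u} p) : Wuphl p := by
  intro α β h0 h1 ⟨H⟩
  obtain ⟨α', K, hK⟩ := hp.exists_homotopy_lift H.toHomotopy
  let βp : Path (α 0) (α 1) := ⟨β, h0.symm, h1.symm⟩
  have square := Path.Homotopic.map_trans_evalAt K Path.id
  -- `βp` is padded by constant paths so that both sides have the same parametrisation.
  have lifted :
      ((K.evalAt 0).trans ((Path.id.map α'.continuous).trans (K.evalAt 1).symm)).Homotopic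
        ((Path.refl _).trans (βp.trans (Path.refl _))) := by
    refine hw.homotopic_of_map_eq (Path.ext ?_)
    simp only [Path.map_trans]
    refine Path.coe_trans_congr ?_ (Path.coe_trans_congr ?_ ?_)
    · funext t
      exact (hK (t, 0)).trans (H.eq_fst t (by simp))
    · funext t
      exact (congrArg p (K.apply_one t).symm).trans ((hK (1, t)).trans (H.apply_one t))
    · funext t
      exact (hK (σ t, 1)).trans (H.eq_fst _ (by simp))
  change (Path.id.map α.continuous).Homotopic βp
  rw [← Path.Homotopic.Quotient.eq] at square lifted ⊢
  simp only [Path.Homotopic.Quotient.mk_trans, Path.Homotopic.Quotient.mk_symm,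
    Path.Homotopic.Quotient.mk_refl] at square lifted
  open Path.Homotopic.Quotient in
  rwa [← trans_assoc, ← square, trans_assoc, trans_symm, trans_refl, refl_trans, trans_refl]
    at lifted

theorem Wuphl.whupl (hw : Wuphl p) : Whupl p :=
  fun α β h0 h1 h => hw α β h0 h1 (h ▸ ContinuousMap.HomotopicRel.refl _)

end

theorem fibration_whupl_iff_wuphl {E B : Type*} [TopologicalSpace E] [TopologicalSpace B]
    (p : C(E, B)) (hp : IsFibration p) :
    Whupl p ↔ Wuphl p :=
  ⟨fun hw => hw.wuphl hp, Wuphl.whupl⟩
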